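/- arXiv:2411.09333 — 8 statements merged into one kernel-verified Lean document; each statement's English description precedes it below -/
import Mathlib

section
/- Let p be a prime ideal of R. The sum of a family of p-second submodules of an R-module M is again a p-second submodule (provided the family is nonempty with each member nonzero). -/
open Pointwise

variable {R : Type*} [CommRing R] {M : Type*} [AddCommGroup M] [Module R M]

/-- A submodule `S` is *second* if `S ≠ 0` and for every `r : R`, `r • S = S` or `r • S = 0`. -/
def IsSecondSubmodule (S : Submodule R M) : Prop :=
  S ≠ ⊥ ∧ ∀ r : R, r • S = S ∨ r • S = ⊥

/-- `S` is a *p-second* submodule if it is second with annihilator `p`. -/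
def IsPSecondSubmodule (p : Ideal R) (S : Submodule R M) : Prop :=
  IsSecondSubmodule S ∧ S.annihilator = p

theorem Submodule.pointwise_smul_eq_bot_iff_mem_annihilator {r : R} {N : Submodule R M} :
    r • N = ⊥ ↔ r ∈ N.annihilator := by
  rw [← ideal_span_singleton_smul, ← le_annihilator_iff, Ideal.span_singleton_le_iff_mem]

theorem isPSecondSubmodule_iff {p : Ideal R} {S : Submodule R M} :
    IsPSecondSubmodule p S ↔ S ≠ ⊥ ∧ S.annihilator = p ∧ ∀ r ∉ p, r • S = S := by
  simp only [IsPSecondSubmodule, IsSecondSubmodule,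
    Submodule.pointwise_smul_eq_bot_iff_mem_annihilator]
  constructor
  · rintro ⟨⟨hS, hdich⟩, rfl⟩
    exact ⟨hS, rfl, fun r hr => (hdich r).resolve_right hr⟩
  · rintro ⟨hS, rfl, hsmul⟩
    exact ⟨⟨hS, fun r => (em' (r ∈ S.annihilator)).imp (hsmul r) id⟩, rfl⟩

theorem iSup_isPSecond_general {ι : Type*} [Nonempty ι] (p : Ideal R)
    (S : ι → Submodule R M) (hS : ∀ i, IsPSecondSubmodule p (S i)) :
    IsPSecondSubmodule p (⨆ i, S i) := by
  simp only [isPSecondSubmodule_iff] at hS ⊢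
  obtain ⟨i₀⟩ := ‹Nonempty ι›
  refine ⟨?_, ?_, fun r hr => ?_⟩
  · exact ne_bot_of_le_ne_bot (hS i₀).1 (le_iSup S i₀)
  · simp only [Submodule.annihilator_iSup, fun i => (hS i).2.1, iInf_const]
  · simp only [Submodule.smul_iSup', fun i => (hS i).2.2 r hr]

theorem iSup_isPSecond {ι : Type*} [Nonempty ι] (p : Ideal R) (hp : p.IsPrime)
    (S : ι → Submodule R M) (hS : ∀ i, IsPSecondSubmodule p (S i)) :
    IsPSecondSubmodule p (⨆ i, S i) :=
  iSup_isPSecond_general p S hS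
end

section
/- Let M be a finitely generated R-module which is a second module. Then M is a prime module, i.e., the zero submodule of M is a prime submodule. -/
open Pointwise

variable {R : Type*} [CommRing R] {M : Type*} [AddCommGroup M] [Module R M]

/-- A proper submodule `P` is *prime* if `r • m ∈ P` implies `m ∈ P` or `r • M ⊆ P`. -/
def IsPrimeSubmodule (P : Submodule R M) : Prop :=
  P ≠ ⊤ ∧ ∀ (r : R) (m : M), r • m ∈ P → m ∈ P ∨ ∀ x : M, r • x ∈ P

theorem isPrimeModule_of_isSecondModule_of_finite [Module.Finite R M]
    (hM : IsSecondSubmodule (⊤ : Submodule R M)) :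
    IsPrimeSubmodule (⊥ : Submodule R M) := by
  obtain ⟨hne, hsec⟩ := hM
  refine ⟨fun h => hne h.symm, fun r m hrm => ?_⟩
  rcases hsec r with h | h
  · left
    have hsurj : Function.Surjective (LinearMap.lsmul R M r) := by
      intro x
      have hx : x ∈ r • (⊤ : Submodule R M) := h.symm ▸ Submodule.mem_top
      rw [← SetLike.mem_coe, Submodule.coe_pointwise_smul] at hx
      obtain ⟨y, -, hy⟩ := hx
      exact ⟨y, hy⟩
    have hinj := OrzechProperty.injective_of_surjective_endomorphism
      (LinearMap.lsmul R M r) hsurj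
    have : r • m = r • (0 : M) := by
      simpa using (Submodule.mem_bot R).mp hrm
    simpa using hinj this
  · right
    intro x
    have : r • x ∈ r • (⊤ : Submodule R M) :=
      Submodule.smul_mem_pointwise_smul x r ⊤ Submodule.mem_top
    rw [h] at this
    exact this
end

section
/- Let M be an Artinian R-module which is a prime module. Then M is a second module. -/
open Pointwise

variable {R : Type*} [CommRing R] {M : Type*} [AddCommGroup M] [Module R M]

theorem isSecondModule_of_isPrimeModule_of_artinian [IsArtinian R M]
    (hM : IsPrimeSubmodule (⊥ : Submodule R M)) :
    IsSecondSubmodule (⊤ : Submodule R M) := by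
  obtain ⟨hne, hp⟩ := hM
  refine ⟨fun h => hne h.symm, fun r => ?_⟩
  by_cases hann : ∀ x : M, r • x = 0
  · right
    rw [eq_bot_iff]
    rintro x hx
    obtain ⟨y, -, rfl⟩ := hx
    simpa using hann y
  · left
    push_neg at hann
    obtain ⟨x₀, hx₀⟩ := hann
    have hinj : Function.Injective (LinearMap.lsmul R M r) := by
      intro a b hab
      have h0 : r • (a - b) = 0 := by
        simp only [smul_sub]
        simpa [LinearMap.lsmul_apply] using sub_eq_zero.mpr hab
      rcases hp r (a - b) (by simpa using h0) with h | h
      · exact sub_eq_zero.mp (by simpa using h)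
      · exact absurd (by simpa using h x₀) hx₀
    have hsurj : Function.Surjective (LinearMap.lsmul R M r) :=
      IsArtinian.surjective_of_injective_endomorphism _ hinj
    refine le_antisymm ?_ ?_
    · exact le_top
    · intro m _
      obtain ⟨y, hy⟩ := hsurj m
      exact ⟨y, Submodule.mem_top, by simpa using hy⟩
end

section
/- Let M be a finitely generated second R-module. Then M is an Artinian R-module. -/
open Pointwise

variable {R : Type*} [CommRing R] {M : Type*} [AddCommGroup M] [Module R M]

/-- Auxiliary: if the annihilator of a finite module is maximal, the module is Artinian. -/
lemma isArtinian_of_annihilator_isMaximal [Module.Finite R M]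
    (hmax : (Module.annihilator R M).IsMaximal) : IsArtinian R M := by
  letI : Module (R ⧸ Module.annihilator R M) M := Module.quotientAnnihilator
  haveI : IsScalarTower R (R ⧸ Module.annihilator R M) M :=
    Module.IsTorsionBySet.isScalarTower (Module.isTorsionBySet_annihilator R M)
  haveI : Module.Finite (R ⧸ Module.annihilator R M) M :=
    Module.Finite.of_restrictScalars_finite R (R ⧸ Module.annihilator R M) M
  haveI : IsArtinianRing (R ⧸ Module.annihilator R M) := by
    letI : Field (R ⧸ Module.annihilator R M) := Ideal.Quotient.field _
    exact DivisionRing.instIsArtinianRing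
  haveI hA : IsArtinian (R ⧸ Module.annihilator R M) M :=
    isArtinian_of_fg_of_artinian' (R := R ⧸ Module.annihilator R M)
  -- every `R`-submodule is an `R ⧸ ann`-submodule, giving an order embedding
  let e : Submodule R M ↪o Submodule (R ⧸ Module.annihilator R M) M :=
    { toFun := fun N =>
        { carrier := N
          add_mem' := fun ha hb => N.add_mem ha hb
          zero_mem' := N.zero_mem
          smul_mem' := fun c x hx => by
            obtain ⟨r, rfl⟩ := Ideal.Quotient.mk_surjective c
            exact N.smul_mem r hx }
      inj' := fun N N' h => by
        ext x
        exact SetLike.ext_iff.mp h x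
      map_rel_iff' := Iff.rfl }
  exact ⟨e.ltEmbedding.wellFounded IsWellFounded.wf⟩

theorem isArtinian_of_isSecondModule_of_finite [Module.Finite R M]
    (hM : IsSecondSubmodule (⊤ : Submodule R M)) :
    IsArtinian R M := by
  obtain ⟨hne, hsec⟩ := hM
  apply isArtinian_of_annihilator_isMaximal
  have hbot : ∀ r : R, r • (⊤ : Submodule R M) = ⊥ ↔ r ∈ Module.annihilator R M := by
    intro r
    constructor
    · intro h
      rw [Module.mem_annihilator]
      intro m
      have : r • m ∈ r • (⊤ : Submodule R M) :=
        Submodule.smul_mem_pointwise_smul m r ⊤ trivial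
      rw [h] at this
      simpa using this
    · intro h
      rw [Module.mem_annihilator] at h
      rw [Submodule.eq_bot_iff]
      rintro x hx
      rw [← SetLike.mem_coe, Submodule.coe_pointwise_smul] at hx
      obtain ⟨m, -, rfl⟩ := hx
      exact h m
  constructor
  constructor
  · intro hEq
    have h1 : (1 : R) ∈ Module.annihilator R M := hEq ▸ trivial
    rw [Module.mem_annihilator] at h1
    apply hne
    rw [Submodule.eq_bot_iff]
    intro x _
    simpa using h1 x
  · intro J hJ
    obtain ⟨r, hrJ, hrI⟩ := SetLike.exists_of_lt hJ
    have hrtop : r • (⊤ : Submodule R M) = ⊤ := by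
      rcases hsec r with h | h
      · exact h
      · exact absurd ((hbot r).mp h) hrI
    have hle : (⊤ : Submodule R M) ≤ J • ⊤ := by
      intro m _
      have hm : m ∈ r • (⊤ : Submodule R M) := by rw [hrtop]; trivial
      rw [← SetLike.mem_coe, Submodule.coe_pointwise_smul] at hm
      obtain ⟨x, -, rfl⟩ := hm
      exact Submodule.smul_mem_smul hrJ trivial
    obtain ⟨s, hs1, hs0⟩ :=
      Submodule.exists_sub_one_mem_and_smul_eq_zero_of_fg_of_le_smul J ⊤
        Module.Finite.fg_top hle
    have hsI : s ∈ Module.annihilator R M :=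
      Module.mem_annihilator.mpr fun m => hs0 m trivial
    have h1J : (1 : R) ∈ J := by
      have := J.sub_mem (hJ.le hsI) hs1
      simpa using this
    exact Ideal.eq_top_iff_one J |>.mpr h1J
end

section
/- Let M be an R-module in which every nonzero submodule is second. Then for every submodule K of M and every ideal I of R, (K :_M I) = (K :_M I²). -/
open Pointwise

variable {R : Type*} [CommRing R] {M : Type*} [AddCommGroup M] [Module R M]

/-- The submodule `(K :_M I) = {m : M | I • m ⊆ K}`. -/
def Submodule.mcolon (K : Submodule R M) (I : Ideal R) : Submodule R M where
  carrier := {m : M | ∀ r ∈ I, r • m ∈ K}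
  add_mem' := fun ha hb r hr => by
    simpa [smul_add] using K.add_mem (ha r hr) (hb r hr)
  zero_mem' := fun r hr => by simp
  smul_mem' := fun c a ha r hr => by
    rw [smul_comm]; exact K.smul_mem c (ha r hr)

theorem Submodule.mcolon_antitone (K : Submodule R M) {I J : Ideal R} (hIJ : I ≤ J) :
    K.mcolon J ≤ K.mcolon I :=
  fun _ hm r hr => hm r (hIJ hr)

/-- If `r • Rm = Rm`, then `m = r • c • m` for some `c`, so `r • m = c • r ^ 2 • m`. -/
theorem IsSecondSubmodule.smul_mem_span_sq_smul {m : M}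
    (hm : IsSecondSubmodule (Submodule.span R {m})) (r : R) :
    r • m ∈ Submodule.span R {(r ^ 2) • m} := by
  rcases hm.2 r with hfix | hkill
  · obtain ⟨n, hn, hnm⟩ : m ∈ r • Submodule.span R {m} := by
      rw [hfix]; exact Submodule.mem_span_singleton_self m
    obtain ⟨c, rfl⟩ := Submodule.mem_span_singleton.mp hn
    rw [DistribSMul.toLinearMap_apply] at hnm
    refine Submodule.mem_span_singleton.mpr ⟨c, ?_⟩
    calc c • (r ^ 2) • m = r • r • c • m := by simp only [smul_smul]; ring_nf
      _ = r • m := by rw [hnm]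
  · have : r • m ∈ r • Submodule.span R {m} :=
      Submodule.smul_mem_pointwise_smul m r _ (Submodule.mem_span_singleton_self m)
    rw [hkill, Submodule.mem_bot] at this
    rw [this]
    exact Submodule.zero_mem _

theorem mcolon_sq_eq_mcolon
    (h : ∀ S : Submodule R M, S ≠ ⊥ → IsSecondSubmodule S)
    (K : Submodule R M) (I : Ideal R) :
    Submodule.mcolon K I = Submodule.mcolon K (I ^ 2) := by
  refine le_antisymm (K.mcolon_antitone (Ideal.pow_le_self two_ne_zero)) fun m hm => ?_
  rcases eq_or_ne m 0 with rfl | hm0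
  · exact Submodule.zero_mem _
  intro r hr
  have hsecond := h (Submodule.span R {m}) (by simpa [Submodule.span_singleton_eq_bot] using hm0)
  have hsq : (r ^ 2) • m ∈ K := hm (r ^ 2) (Ideal.pow_mem_pow hr 2)
  exact Submodule.span_le.mpr (Set.singleton_subset_iff.mpr hsq) (hsecond.smul_mem_span_sq_smul r)
end

section
/- Let M be a module over a commutative ring R in which every prime ideal is maximal. Then M is a second R-module if and only if M is homogeneous semisimple, i.e., M is nonzero, semisimple, and all its simple submodules are isomorphic (equivalently, M is a nonzero semisimple module annihilated by a single maximal ideal). -/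
open Pointwise

variable {R : Type*} [CommRing R] {M : Type*} [AddCommGroup M] [Module R M]

lemma smul_top_eq_bot_iff (r : R) :
    r • (⊤ : Submodule R M) = ⊥ ↔ r ∈ (⊤ : Submodule R M).annihilator := by
  rw [Submodule.mem_annihilator, eq_bot_iff]
  constructor
  · intro hle m _
    have : r • m ∈ r • (⊤ : Submodule R M) :=
      Submodule.smul_mem_pointwise_smul m r ⊤ trivial
    simpa using hle this
  · intro hann x hx
    rw [← SetLike.mem_coe, Submodule.coe_pointwise_smul, Set.mem_smul_set] at hx
    obtain ⟨y, -, rfl⟩ := hx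
    simpa using hann y trivial

theorem isSecond_iff_homogeneous_semisimple
    (h : ∀ p : Ideal R, p.IsPrime → p.IsMaximal) :
    IsSecondSubmodule (⊤ : Submodule R M) ↔
      IsSemisimpleModule R M ∧ Nontrivial M ∧
        (⊤ : Submodule R M).annihilator.IsMaximal := by
  constructor
  · rintro ⟨hne, hsm⟩
    have hnt : Nontrivial M := by
      by_contra hn
      have := not_nontrivial_iff_subsingleton.mp hn
      exact hne (Subsingleton.elim _ _)
    set I := (⊤ : Submodule R M).annihilator with hI
    have hprime : I.IsPrime := by
      constructor
      · intro htop
        have h1 : (1 : R) ∈ I := htop ▸ trivial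
        rw [Submodule.mem_annihilator] at h1
        obtain ⟨x, y, hxy⟩ := hnt
        have hx : x = 0 := by simpa using h1 x trivial
        have hy : y = 0 := by simpa using h1 y trivial
        exact hxy (hx.trans hy.symm)
      · intro r s hrs
        by_contra hcon
        push_neg at hcon
        obtain ⟨hr, hs⟩ := hcon
        have hr' : r • (⊤ : Submodule R M) = ⊤ :=
          (hsm r).resolve_right (fun hb => hr ((smul_top_eq_bot_iff r).mp hb))
        have hs' : s • (⊤ : Submodule R M) = ⊤ :=
          (hsm s).resolve_right (fun hb => hs ((smul_top_eq_bot_iff s).mp hb))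
        have : (r * s) • (⊤ : Submodule R M) = ⊤ := by
          rw [mul_smul, hs', hr']
        rw [(smul_top_eq_bot_iff (r * s)).mpr hrs] at this
        exact hne this.symm
    have hmax : I.IsMaximal := h I hprime
    refine ⟨?_, hnt, hmax⟩
    -- semisimplicity: M is a vector space over the field R ⧸ I
    have htor : Module.IsTorsionBySet R M I := Module.isTorsionBySet_annihilator_top R M
    letI : Module (R ⧸ I) M := htor.module
    letI : Field (R ⧸ I) := Ideal.Quotient.field I
    let l : M →ₛₗ[Ideal.Quotient.mk I] M :=
      { toFun := id
        map_add' := fun _ _ => rfl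
        map_smul' := fun r x => (htor.mk_smul r x).symm }
    exact (l.isSemisimpleModule_iff_of_bijective Function.bijective_id).mpr inferInstance
  · rintro ⟨hss, hnt, hmax⟩
    constructor
    · intro htop
      obtain ⟨x, y, hxy⟩ := hnt
      exact hxy ((Submodule.mem_bot R).mp (htop ▸ (Submodule.mem_top : x ∈ ⊤)) ▸
        ((Submodule.mem_bot R).mp (htop ▸ (Submodule.mem_top : y ∈ ⊤))).symm ▸ rfl)
    · intro r
      by_cases hr : r ∈ (⊤ : Submodule R M).annihilator
      · exact Or.inr ((smul_top_eq_bot_iff r).mpr hr)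
      · left
        refine le_antisymm (fun x hx => trivial) (fun x _ => ?_)
        obtain ⟨c, i, hi, hci⟩ := hmax.exists_inv hr
        have : x = r • (c • x) + i • x := by
          rw [smul_smul, mul_comm r c, ← add_smul, hci, one_smul]
        rw [this]
        have hix : i • x = 0 := by
          rw [Submodule.mem_annihilator] at hi
          exact hi x trivial
        rw [hix, add_zero]
        exact Submodule.smul_mem_pointwise_smul (c • x) r ⊤ trivial
end

section
/- Let S be a multiplicatively closed subset of R, M an R-module, and N an S-second submodule of M. Then Ann_R(N) is an S-prime ideal of R. -/
open Pointwise

variable {R : Type*} [CommRing R] {M : Type*} [AddCommGroup M] [Module R M]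

/-- `N` is an *S-second* submodule: `Ann(N) ∩ S = ∅` and there is `s ∈ S` such that
for all `r : R`, `s • r • N = 0` or `s • r • N = s • N`. -/
def IsSSecondSubmodule (S : Submonoid R) (N : Submodule R M) : Prop :=
  (∀ s ∈ S, s ∉ N.annihilator) ∧
    ∃ s ∈ S, ∀ r : R, s • r • N = (⊥ : Submodule R M) ∨ s • r • N = s • N

/-- An ideal `P` with `P ∩ S = ∅` is *S-prime* if there is `s ∈ S` such that
`a * b ∈ P` implies `s * a ∈ P` or `s * b ∈ P`. -/
def Ideal.IsSPrime (S : Submonoid R) (P : Ideal R) : Prop :=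
  (∀ s ∈ S, s ∉ P) ∧ ∃ s ∈ S, ∀ a b : R, a * b ∈ P → s * a ∈ P ∨ s * b ∈ P

theorem annihilator_isSPrime_of_isSSecond (S : Submonoid R) (N : Submodule R M)
    (hN : IsSSecondSubmodule S N) : Ideal.IsSPrime S N.annihilator := by
  obtain ⟨h1, s, hs, h2⟩ := hN
  refine ⟨h1, s, hs, fun a b hab => ?_⟩
  rcases h2 a with h | h
  · left
    rw [Submodule.mem_annihilator]
    intro n hn
    have : (s * a) • n ∈ s • a • N := by
      rw [mul_smul]
      exact Submodule.smul_mem_pointwise_smul _ s _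
        (Submodule.smul_mem_pointwise_smul n a N hn)
    rw [h] at this
    exact this
  · right
    rw [Submodule.mem_annihilator]
    intro n hn
    have hsn : s • n ∈ s • a • N := h ▸ Submodule.smul_mem_pointwise_smul n s N hn
    have hsn' : s • n ∈ s • ((a • N : Submodule R M) : Set M) := by
      rw [← Submodule.coe_pointwise_smul]; exact hsn
    obtain ⟨m, hm, hm'⟩ := hsn'
    rw [Submodule.coe_pointwise_smul] at hm
    obtain ⟨m', hm'', rfl⟩ := hm
    rw [Submodule.mem_annihilator] at hab
    calc (s * b) • n = b • (s • n) := by rw [mul_smul, smul_comm]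
      _ = b • (s • a • m') := by rw [← hm']
      _ = s • (a * b) • m' := by
            rw [mul_smul a b, smul_comm b s, smul_comm b a]
      _ = 0 := by rw [hab m' hm'', smul_zero]
end

section
/- Let f : M → M' be an injective homomorphism of R-modules. If N is a second submodule of M, then f(N) is a second submodule of M'; and if N' is a second submodule of M' with N' ⊆ f(M), then f⁻¹(N') is a second submodule of M. -/
open Pointwise

variable {R : Type*} [CommRing R] {M : Type*} [AddCommGroup M] [Module R M]

lemma map_pointwise_smul_aux {M' : Type*} [AddCommGroup M'] [Module R M']
    (f : M →ₗ[R] M') (r : R) (N : Submodule R M) :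
    (r • N).map f = r • N.map f := by
  ext x
  simp only [Submodule.mem_map, ← SetLike.mem_coe, Submodule.coe_pointwise_smul, Set.mem_smul_set, SetLike.mem_coe]
  constructor
  · rintro ⟨y, ⟨m, hm, rfl⟩, rfl⟩
    exact ⟨f m, ⟨m, hm, rfl⟩, (f.map_smul r m).symm⟩
  · rintro ⟨y, ⟨m, hm, rfl⟩, rfl⟩
    exact ⟨r • m, ⟨m, hm, rfl⟩, f.map_smul r m⟩

theorem isSecond_map_and_comap {M' : Type*} [AddCommGroup M'] [Module R M']
    (f : M →ₗ[R] M') (hf : Function.Injective f) :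
    (∀ N : Submodule R M, IsSecondSubmodule N → IsSecondSubmodule (N.map f)) ∧
      (∀ N' : Submodule R M', IsSecondSubmodule N' → N' ≤ LinearMap.range f →
        IsSecondSubmodule (N'.comap f)) := by
  have hinj := Submodule.map_injective_of_injective (f := f) hf
  constructor
  · rintro N ⟨hN0, hN⟩
    refine ⟨fun h => hN0 (hinj (by rw [h, Submodule.map_bot])), fun r => ?_⟩
    rcases hN r with h | h
    · left; rw [← map_pointwise_smul_aux f, h]
    · right; rw [← map_pointwise_smul_aux f, h, Submodule.map_bot]
  · rintro N' ⟨hN0, hN⟩ hle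
    have hmap : (N'.comap f).map f = N' := Submodule.map_comap_eq_of_le hle
    refine ⟨fun h => hN0 (by rw [← hmap, h, Submodule.map_bot]), fun r => ?_⟩
    rcases hN r with h | h
    · left; apply hinj
      rw [map_pointwise_smul_aux f, hmap, h]
    · right; apply hinj
      rw [map_pointwise_smul_aux f, hmap, h, Submodule.map_bot]
end
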